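/- arXiv:2110.14942 — 3 statements merged into one kernel-verified Lean document; each statement's English description precedes it below -/
import Mathlib

section
/- Let Q > 0, ω > 0, x > 0, y > 0 and ℓ ∈ ℕ, and let V be the extremal Reissner–Nordström effective potential. Then V admits no trapping well: there do not exist real numbers 0 < a < b < c such that V(b) < V(a) and V(b) < V(c). -/
open Real

/-- The effective radial potential of a charged massive scalar in the extremal
Reissner–Nordström background, in terms of `x`, `y` encoding the bound-state and
superradiant conditions. -/
noncomputable def Vrn (Q ω x y : ℝ) (ℓ : ℕ) (r : ℝ) : ℝ :=
  (1 + x)^2 * ω^2 + 4*Q*ω^2*(x^2 + 2*x + y)/r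
    + ((ℓ : ℝ)*((ℓ : ℝ) + 1) + 4*Q^2*ω^2*(x^2 + 2*x - (y - 4)*y))/r^2
    - 16*Q^3*(y - 1)*y*ω^2/r^3 - 16*Q^4*y^2*ω^2/r^4

/-! Writing `V'(r) = -P(r) / r⁵`, the numerator `P` is a cubic with positive leading coefficient
and nonpositive constant term. Its `r²` coefficient is nonnegative when `y ≤ 1` and its `r`
coefficient is nonpositive when `y ≥ 1`; accordingly `P(r)/r` or `P(r)/r²` is strictly increasing
on `r > 0`, so once `V'` is negative it stays negative. A well `V(b) < V(a), V(c)` would, by the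
mean value theorem, give a point `s ∈ (a, b)` with `V'(s) < 0` and a later `t ∈ (b, c)` with
`V'(t) > 0`. -/

open Set

theorem min_le_of_hasDerivAt_of_neg_persists {f f' : ℝ → ℝ} {a b c : ℝ} (hab : a < b)
    (hbc : b < c) (hf : ∀ r ∈ Icc a c, HasDerivAt f (f' r) r)
    (hf' : ∀ s t, a < s → s < t → t < c → f' s < 0 → f' t < 0) :
    min (f a) (f c) ≤ f b := by
  have hderiv (u v : ℝ) (hau : a ≤ u) (hvc : v ≤ c) : ∀ r ∈ Ioo u v, HasDerivAt f (f' r) r :=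
    fun r hr => hf r ⟨hau.trans hr.1.le, hr.2.le.trans hvc⟩
  have hcont (u v : ℝ) (hau : a ≤ u) (hvc : v ≤ c) : ContinuousOn f (Icc u v) :=
    fun r hr => (hf r ⟨hau.trans hr.1, hr.2.trans hvc⟩).continuousAt.continuousWithinAt
  obtain ⟨s, hs, hfs⟩ := exists_hasDerivAt_eq_slope f f' hab (hcont a b le_rfl hbc.le)
    (hderiv a b le_rfl hbc.le)
  obtain ⟨t, ht, hft⟩ := exists_hasDerivAt_eq_slope f f' hbc (hcont b c hab.le le_rfl)
    (hderiv b c hab.le le_rfl)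
  by_contra! hmin
  rw [lt_min_iff] at hmin
  have hs_neg : f' s < 0 := hfs ▸ div_neg_of_neg_of_pos (by linarith) (by linarith)
  have ht_pos : 0 < f' t := hft ▸ div_pos (by linarith) (by linarith)
  exact ht_pos.not_gt (hf' s t hs.1 (hs.2.trans ht.1) ht.2 hs_neg)

theorem cubic_pos_of_pos_of_lt {α β γ δ s t : ℝ} (hα : 0 < α) (hδ : δ ≤ 0)
    (hβγ : 0 ≤ β ∨ γ ≤ 0) (hs : 0 < s) (hst : s < t)
    (h : 0 < α * s^3 + β * s^2 + γ * s + δ) : 0 < α * t^3 + β * t^2 + γ * t + δ := by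
  have ht : 0 < t := hs.trans hst
  rcases hβγ with hβ | hγ
  · -- `s p(t) - t p(s) > 0`, i.e. `p(r) / r` increases
    have key : s * (α * t^3 + β * t^2 + γ * t + δ) - t * (α * s^3 + β * s^2 + γ * s + δ)
        = (t - s) * (α * s * t * (s + t) + β * s * t - δ) := by ring
    have : 0 < (t - s) * (α * s * t * (s + t) + β * s * t - δ) := by
      apply mul_pos (by linarith)
      have : 0 ≤ β * s * t := by positivity
      have : 0 < α * s * t * (s + t) := by positivity
      linarith
    nlinarith
  · -- `s² p(t) - t² p(s) > 0`, i.e. `p(r) / r²` increases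
    have key : s^2 * (α * t^3 + β * t^2 + γ * t + δ) - t^2 * (α * s^3 + β * s^2 + γ * s + δ)
        = (t - s) * (α * s^2 * t^2 - γ * s * t - δ * (s + t)) := by ring
    have : 0 < (t - s) * (α * s^2 * t^2 - γ * s * t - δ * (s + t)) := by
      apply mul_pos (by linarith)
      have : 0 ≤ -γ * s * t := by have := neg_nonneg.2 hγ; positivity
      have : 0 ≤ -δ * (s + t) := by have := neg_nonneg.2 hδ; positivity
      have : 0 < α * s^2 * t^2 := by positivity
      linarith
    nlinarith [pow_pos hs 2]

/-- In the paper's notation, `A (r³ + a₂ r² + a₁ r + a₀)` with `A = 4Qω²(x² + 2x + y)`. -/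
def rnCubic (Q ω x y : ℝ) (ℓ : ℕ) (r : ℝ) : ℝ :=
  4*Q*ω^2*(x^2 + 2*x + y) * r^3
    + 2*((ℓ : ℝ)*((ℓ : ℝ) + 1) + 4*Q^2*ω^2*(x^2 + 2*x - (y - 4)*y)) * r^2
    + (-48*Q^3*(y - 1)*y*ω^2) * r + (-64*Q^4*y^2*ω^2)

theorem hasDerivAt_Vrn (Q ω x y : ℝ) (ℓ : ℕ) {r : ℝ} (hr : r ≠ 0) :
    HasDerivAt (Vrn Q ω x y ℓ) (-rnCubic Q ω x y ℓ r / r^5) r := by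
  have hd := ((((hasDerivAt_const r ((1 + x)^2 * ω^2)).add
    ((hasDerivAt_const r (4*Q*ω^2*(x^2 + 2*x + y))).div (hasDerivAt_id' r) hr)).add
    ((hasDerivAt_const r ((ℓ : ℝ)*((ℓ : ℝ) + 1) + 4*Q^2*ω^2*(x^2 + 2*x - (y - 4)*y))).div
      (hasDerivAt_pow 2 r) (pow_ne_zero 2 hr))).sub
    ((hasDerivAt_const r (16*Q^3*(y - 1)*y*ω^2)).div (hasDerivAt_pow 3 r) (pow_ne_zero 3 hr))).sub
    ((hasDerivAt_const r (16*Q^4*y^2*ω^2)).div (hasDerivAt_pow 4 r) (pow_ne_zero 4 hr))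
  refine hd.congr_deriv ?_
  unfold rnCubic
  field_simp
  ring

theorem rnCubic_pos_of_lt {Q ω x y : ℝ} (ℓ : ℕ) (hQ : 0 < Q) (hω : 0 < ω) (hx : 0 < x)
    (hy : 0 < y) {s t : ℝ} (hs : 0 < s) (hst : s < t) (h : 0 < rnCubic Q ω x y ℓ s) :
    0 < rnCubic Q ω x y ℓ t := by
  refine cubic_pos_of_pos_of_lt ?_ ?_ ?_ hs hst h
  · positivity
  · have : 0 ≤ Q^4*y^2*ω^2 := by positivity
    linarith
  rcases le_total y 1 with hy1 | hy1
  · left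
    have : 0 ≤ x^2 + 2*x - (y - 4)*y := by nlinarith
    positivity
  · right
    have : 0 ≤ Q^3 * ω^2 * ((y - 1) * y) := by
      have := mul_nonneg (sub_nonneg.2 hy1) hy.le
      positivity
    linarith

/-- The extremal Reissner–Nordström effective potential admits no trapping well. -/
theorem stmt_0 (Q ω x y : ℝ) (ℓ : ℕ) (hQ : 0 < Q) (hω : 0 < ω)
    (hx : 0 < x) (hy : 0 < y) :
    ¬ ∃ a b c : ℝ, 0 < a ∧ a < b ∧ b < c ∧
      Vrn Q ω x y ℓ b < Vrn Q ω x y ℓ a ∧ Vrn Q ω x y ℓ b < Vrn Q ω x y ℓ c := by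
  rintro ⟨a, b, c, ha, hab, hbc, hVa, hVc⟩
  have hderiv_neg_iff {r : ℝ} (hr : 0 < r) :
      -rnCubic Q ω x y ℓ r / r^5 < 0 ↔ 0 < rnCubic Q ω x y ℓ r := by
    rw [neg_div, neg_lt_zero, div_pos_iff_of_pos_right (pow_pos hr 5)]
  have hmin := min_le_of_hasDerivAt_of_neg_persists hab hbc
    (fun r hr => hasDerivAt_Vrn Q ω x y ℓ (ha.trans_le hr.1).ne')
    fun s t has hst _ hs => (hderiv_neg_iff (ha.trans (has.trans hst))).2 <|
      rnCubic_pos_of_lt ℓ hQ hω hx hy (ha.trans has) hst <| (hderiv_neg_iff (ha.trans has)).1 hs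
  exact (lt_min hVa hVc).not_ge hmin
end

section
/- Let U : ℝ → ℝ be continuous and let R : ℝ → ℂ be twice differentiable with R″(t) = U(t)·R(t) for all t ∈ ℝ. Suppose κ ∈ ℝ, k > 0, c₁, c₂ ∈ ℂ and: R(t) − c₁·exp(−iκt) → 0 and R′(t) + iκ·c₁·exp(−iκt) → 0 as t → −∞, while R(t) − c₂·exp(ikt) → 0 and R′(t) − ik·c₂·exp(ikt) → 0 as t → +∞. Then k·|c₂|² + κ·|c₁|² = 0; in particular, if κ > 0 then c₁ = 0 and c₂ = 0, so no nontrivial quasinormal mode with these real-frequency asymptotics exists. -/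
/-!
Since `U` is real, the flux `Im (conj R · R')` of a solution of `R'' = U R` has derivative
`Im (|R'|² + U |R|²) = 0`, so it is constant. Evaluating it through the asymptotics gives
`-κ |c₁|²` at the horizon and `k |c₂|²` at infinity; equating the two is the claim, and for
`κ > 0` both terms are nonnegative, hence zero.
-/

open Complex Filter Topology ComplexConjugate

def flux (R R' : ℝ → ℂ) (t : ℝ) : ℝ :=
  (conj (R t) * R' t).im

theorem hasDerivAt_flux {V : ℝ → ℝ} {R R' : ℝ → ℂ}
    (hR : ∀ t, HasDerivAt R (R' t) t) (hR' : ∀ t, HasDerivAt R' ((V t : ℂ) * R t) t) (t : ℝ) :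
    HasDerivAt (flux R R') 0 t := by
  have h := imCLM.hasFDerivAt.comp_hasDerivAt t ((hR t).star.mul (hR' t))
  -- both terms `|R'|²` and `V |R|²` of the derivative are real
  have him : imCLM (star (R' t) * R' t + star (R t) * ((V t : ℂ) * R t)) = 0 := by
    simp only [imCLM_apply, add_im, mul_im, mul_re, star_def, conj_re, conj_im, ofReal_re,
      ofReal_im]
    ring
  rwa [him] at h

theorem flux_eq_flux {V : ℝ → ℝ} {R R' : ℝ → ℂ}
    (hR : ∀ t, HasDerivAt R (R' t) t) (hR' : ∀ t, HasDerivAt R' ((V t : ℂ) * R t) t)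
    (s t : ℝ) : flux R R' s = flux R R' t :=
  is_const_of_deriv_eq_zero (fun t => (hasDerivAt_flux hR hR' t).differentiableAt)
    (fun t => (hasDerivAt_flux hR hR' t).deriv) s t

theorem tendsto_mul_conj_of_sub_mul {l : Filter ℝ} {R e : ℝ → ℂ} {a : ℂ}
    (he : ∀ t, ‖e t‖ = 1) (hR : Tendsto (fun t => R t - a * e t) l (𝓝 0)) :
    Tendsto (fun t => R t * conj (e t)) l (𝓝 a) := by
  have hsmall : Tendsto (fun t => (R t - a * e t) * conj (e t)) l (𝓝 0) := by
    rw [tendsto_zero_iff_norm_tendsto_zero] at hR ⊢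
    simpa only [norm_mul, RCLike.norm_conj, he, mul_one] using hR
  have he_conj : ∀ t, e t * conj (e t) = 1 := fun t => by
    rw [mul_conj', he]; simp
  simpa [sub_mul, mul_assoc, he_conj] using hsmall.add_const a

theorem tendsto_conj_mul_of_sub_mul {l : Filter ℝ} {R R' e : ℝ → ℂ} {a b : ℂ}
    (he : ∀ t, ‖e t‖ = 1) (hR : Tendsto (fun t => R t - a * e t) l (𝓝 0))
    (hR' : Tendsto (fun t => R' t - b * e t) l (𝓝 0)) :
    Tendsto (fun t => conj (R t) * R' t) l (𝓝 (conj a * b)) := by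
  have h := ((continuous_conj.tendsto a).comp (tendsto_mul_conj_of_sub_mul he hR)).mul
    (tendsto_mul_conj_of_sub_mul he hR')
  refine h.congr fun t => ?_
  have he_conj : e t * conj (e t) = 1 := by
    rw [mul_conj', he]; simp
  simp only [Function.comp_apply, map_mul, conj_conj]
  linear_combination conj (R t) * R' t * he_conj

theorem norm_exp_I_mul_ofReal_mul (x t : ℝ) : ‖exp (I * (x : ℂ) * (t : ℂ))‖ = 1 := by
  simp [norm_exp]

theorem im_conj_mul_I_mul (x : ℝ) (c : ℂ) : (conj c * (I * x * c)).im = x * ‖c‖ ^ 2 := by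
  rw [mul_left_comm, mul_comm (I * x), ← mul_assoc, conj_mul', ← ofReal_pow]
  simp only [mul_im, mul_re, ofReal_re, ofReal_im, I_re, I_im]
  ring

theorem eq_im_conj_mul_of_flux_eq_const {l : Filter ℝ} [l.NeBot] {R R' e : ℝ → ℂ} {a b : ℂ}
    {w : ℝ} (hflux : ∀ t, flux R R' t = w) (he : ∀ t, ‖e t‖ = 1)
    (hR : Tendsto (fun t => R t - a * e t) l (𝓝 0))
    (hR' : Tendsto (fun t => R' t - b * e t) l (𝓝 0)) :
    w = (conj a * b).im := by
  have h := (continuous_im.tendsto _).comp (tendsto_conj_mul_of_sub_mul he hR hR')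
  exact tendsto_nhds_unique (tendsto_const_nhds.congr fun t => (hflux t).symm) h

theorem stmt_12_general (U : ℝ → ℝ) (R R' : ℝ → ℂ) (κ k : ℝ) (c₁ c₂ : ℂ)
    (hR : ∀ t : ℝ, HasDerivAt R (R' t) t)
    (hR' : ∀ t : ℝ, HasDerivAt R' ((U t : ℂ) * R t) t)
    (hk : 0 < k)
    (h₁ : Tendsto (fun t : ℝ => R t - c₁ * Complex.exp (-(Complex.I * (κ : ℂ) * (t : ℂ))))
      atBot (nhds 0))
    (h₁' : Tendsto (fun t : ℝ =>
        R' t + Complex.I * (κ : ℂ) * c₁ * Complex.exp (-(Complex.I * (κ : ℂ) * (t : ℂ))))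
      atBot (nhds 0))
    (h₂ : Tendsto (fun t : ℝ => R t - c₂ * Complex.exp (Complex.I * (k : ℂ) * (t : ℂ)))
      atTop (nhds 0))
    (h₂' : Tendsto (fun t : ℝ =>
        R' t - Complex.I * (k : ℂ) * c₂ * Complex.exp (Complex.I * (k : ℂ) * (t : ℂ)))
      atTop (nhds 0)) :
    k * ‖c₂‖^2 + κ * ‖c₁‖^2 = 0 ∧ (0 < κ → c₁ = 0 ∧ c₂ = 0) := by
  have hflux : ∀ t, flux R R' t = flux R R' 0 := fun t => flux_eq_flux hR hR' t 0
  have hR'_bot : Tendsto (fun t : ℝ => R' t - -(I * κ * c₁) * exp (I * (-κ : ℝ) * t))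
      atBot (𝓝 0) :=
    h₁'.congr fun t => by push_cast; ring_nf
  have hbot := eq_im_conj_mul_of_flux_eq_const hflux (norm_exp_I_mul_ofReal_mul (-κ))
    (by simpa using h₁) hR'_bot
  have htop := eq_im_conj_mul_of_flux_eq_const hflux (norm_exp_I_mul_ofReal_mul k)
    (by simpa using h₂) h₂'
  have hmain : k * ‖c₂‖ ^ 2 + κ * ‖c₁‖ ^ 2 = 0 := by
    rw [mul_neg, neg_im, im_conj_mul_I_mul] at hbot
    rw [im_conj_mul_I_mul] at htop
    linarith
  refine ⟨hmain, fun hκ => ?_⟩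
  have hterms := (add_eq_zero_iff_of_nonneg (by positivity) (by positivity)).mp hmain
  simpa [hk.ne', hκ.ne', and_comm] using hterms

/-- For a solution `R : ℝ → ℂ` of `R″ = U·R` (with `U : ℝ → ℝ` continuous) which is
purely ingoing at the horizon, `R(t) ≈ c₁·exp(−iκt)` as `t → −∞`, and purely outgoing
at infinity, `R(t) ≈ c₂·exp(ikt)` as `t → +∞` with `k > 0`, one has
`k·|c₂|² + κ·|c₁|² = 0`; in particular if `κ > 0` then `c₁ = 0` and `c₂ = 0`, so no
nontrivial quasinormal mode with these real-frequency asymptotics exists. -/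
theorem stmt_12 (U : ℝ → ℝ) (R R' : ℝ → ℂ) (κ k : ℝ) (c₁ c₂ : ℂ)
    (hU : Continuous U)
    (hR : ∀ t : ℝ, HasDerivAt R (R' t) t)
    (hR' : ∀ t : ℝ, HasDerivAt R' ((U t : ℂ) * R t) t)
    (hk : 0 < k)
    (h₁ : Tendsto (fun t : ℝ => R t - c₁ * Complex.exp (-(Complex.I * (κ : ℂ) * (t : ℂ))))
      atBot (nhds 0))
    (h₁' : Tendsto (fun t : ℝ =>
        R' t + Complex.I * (κ : ℂ) * c₁ * Complex.exp (-(Complex.I * (κ : ℂ) * (t : ℂ))))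
      atBot (nhds 0))
    (h₂ : Tendsto (fun t : ℝ => R t - c₂ * Complex.exp (Complex.I * (k : ℂ) * (t : ℂ)))
      atTop (nhds 0))
    (h₂' : Tendsto (fun t : ℝ =>
        R' t - Complex.I * (k : ℂ) * c₂ * Complex.exp (Complex.I * (k : ℂ) * (t : ℂ)))
      atTop (nhds 0)) :
    k * ‖c₂‖^2 + κ * ‖c₁‖^2 = 0 ∧ (0 < κ → c₁ = 0 ∧ c₂ = 0) :=
  stmt_12_general U R R' κ k c₁ c₂ hR hR' hk h₁ h₁' h₂ h₂'
end

section
/- For every ε > 0, Q₁ > 0, ω > 0, x > 0 and s ∈ ℝ with √2·s > ω, there exist q₁, q₂ ∈ ℝ with q₁ + q₂ = s and q₂ < 0 such that 2Q₁·( 2√2·(x + yω) + ε·(√2·(x − ω²) + 4q₂ω) ) < 0, where y = √2·s − ω > 0. (Hence, no matter how small the deviation ε of the (2,2)-charge STU black hole from the RN black hole, the leading 1/r-coefficient β of the effective potential at infinity can be made negative while preserving the bound-state and superradiant conditions.) -/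
open Real

/-- For any deviation `ε > 0` of the `(2,2)`-charge STU black hole from the RN black
hole, and any data satisfying the bound-state (`x > 0`) and superradiant
(`√2·s > ω`, `s = q₁+q₂`) conditions, one can choose scalar charges `q₁, q₂` with
`q₁ + q₂ = s` and `q₂ < 0` making the leading `1/r`-coefficient
`β = 2Q₁(2√2(x+yω) + ε(√2(x−ω²)+4q₂ω))` of the effective potential negative,
where `y = √2·s − ω > 0`. -/
theorem stmt_17 (ε Q₁ ω x s : ℝ) (hε : 0 < ε) (hQ₁ : 0 < Q₁) (hω : 0 < ω)
    (hx : 0 < x) (hs : ω < Real.sqrt 2 * s) :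
    ∃ q₁ q₂ : ℝ, q₁ + q₂ = s ∧ q₂ < 0 ∧
      2*Q₁*(2*Real.sqrt 2*(x + (Real.sqrt 2 * s - ω)*ω)
        + ε*(Real.sqrt 2*(x - ω^2) + 4*q₂*ω)) < 0 := by
  set A : ℝ := 2*Real.sqrt 2*(x + (Real.sqrt 2 * s - ω)*ω) + ε*(Real.sqrt 2*(x - ω^2)) with hA
  refine ⟨s + (|A| + 1)/(4*ε*ω), -((|A| + 1)/(4*ε*ω)), by ring, ?_, ?_⟩
  · have h1 : 0 < (|A| + 1)/(4*ε*ω) :=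
      div_pos (by positivity) (by positivity)
    linarith
  · have h4 : (4:ℝ)*ε*ω ≠ 0 := by positivity
    have key : ε*(4*(-((|A| + 1)/(4*ε*ω)))*ω) = -(|A| + 1) := by
      field_simp
    have hAle : A ≤ |A| := le_abs_self A
    have : 2*Real.sqrt 2*(x + (Real.sqrt 2 * s - ω)*ω)
        + ε*(Real.sqrt 2*(x - ω^2) + 4*(-((|A| + 1)/(4*ε*ω)))*ω)
        = A + ε*(4*(-((|A| + 1)/(4*ε*ω)))*ω) := by rw [hA]; ring
    rw [this, key]
    have : A - (|A| + 1) < 0 := by linarith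
    nlinarith
end
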